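/- For all integers n > m ≥ 1, the quantity ln I(n)/v(n) is bounded as follows: 2·ln 2/(3^n+1) + ((3^{−m} − 3^{−n})·ln 4)/(1 + 3^{−n}) + (2/3)·(3^{−m}/(1 + 3^{−n}))·ln pc(m) < ln I(n)/v(n) < (2/(3^n+1))·( ln 2 + (1/3)·ln(β(m) + (3/2)·γ(m)) ) + ((3^{−m} − 3^{−n})/(1 + 3^{−n}))·( ln 4 + ln(1 + (β(m)−1)/4) + (1/3)·ln(1 + γ(m)^3/32) ) + (2/3)·(3^{−m}/(1 + 3^{−n}))·ln pc(m). -/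

import Mathlib

/-- One step of the recursion for the ice-model boundary counts
`(pa, pb, pc, pd)` on the Sierpinski gasket `SG(n)`. -/
def iceStep : ℕ × ℕ × ℕ × ℕ → ℕ × ℕ × ℕ × ℕ
  | (a, b, c, d) =>
    ((a + b) ^ 2 * (a + 3 * c + d),
     (a + b) ^ 2 * (b + 3 * c + d),
     a ^ 2 * b + b ^ 2 * a + (3 * c + d) ^ 3,
     a ^ 3 + b ^ 3 + (3 * c + d) ^ 3)

/-- The quadruple `(pa(n), pb(n), pc(n), pd(n))`. -/
def iceSeq : ℕ → ℕ × ℕ × ℕ × ℕ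
  | 0 => (0, 1, 0, 1)
  | n + 1 => iceStep (iceSeq n)

def pa (n : ℕ) : ℕ := (iceSeq n).1
def pb (n : ℕ) : ℕ := (iceSeq n).2.1
def pc (n : ℕ) : ℕ := (iceSeq n).2.2.1
def pd (n : ℕ) : ℕ := (iceSeq n).2.2.2

noncomputable def alphaSeq (n : ℕ) : ℝ := (pa n : ℝ) / (pb n : ℝ)
noncomputable def betaSeq (n : ℕ) : ℝ := (pd n : ℝ) / (pc n : ℝ)
noncomputable def gammaSeq (n : ℕ) : ℝ := (pb n : ℝ) / (pc n : ℝ)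

/-- The number of ice-model configurations on `SG(n)`. -/
def iceI (n : ℕ) : ℕ := 6 * pa n + 6 * pb n + 6 * pc n + 2 * pd n

/-- The number of vertices of `SG(n)` (the division is exact). -/
def vSG (n : ℕ) : ℕ := 3 * (3 ^ n + 1) / 2

/-!
For `k ≥ 1` the quadruple `(pa k, pb k, pc k, pd k)` satisfies `1 ≤ pa < pb`, `1 ≤ pc ≤ pd`
and `4 (pa + pb) ≤ 3 (3 pc + pd)`, and under these bounds the ratios `β = pd / pc` and
`γ = pb / pc` are non-increasing. Since `pc (k+1) ≥ (3 pc k + pd k)^3 ≥ 64 pc(k)^3`, the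
quantity `8 pc` at least cubes at every step, so `I(n) > 8 pc(n) ≥ (8 pc(m))^(3^(n-m))`.
Conversely, for `k ≥ m`,
`pc (k+1) ≤ 2 pb(k)^3 + (3 pc k + pd k)^3 ≤ pc(k)^3 (3 + β(m))^3 (1 + γ(m)^3/32)` and
`I(n) < 8 (β(m) + 3/2 γ(m)) pc(n)`. Taking logarithms, `log pc` obeys `x ↦ 3 x + L`, and
dividing by `v(n) = 3 (3^n + 1) / 2` gives both bounds.
-/

open Real Finset

theorem le_pow_mul_add_geom_sum_mul {R : Type*} [CommSemiring R] [PartialOrder R]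
    [IsOrderedRing R] {u : ℕ → R} {r L : R} {m : ℕ} (hr : 0 ≤ r)
    (h : ∀ k, m ≤ k → u (k + 1) ≤ r * u k + L) (j : ℕ) :
    u (m + j) ≤ r ^ j * u m + (∑ i ∈ range j, r ^ i) * L := by
  induction j with
  | zero => simp
  | succ j ih =>
    calc u (m + j + 1) ≤ r * u (m + j) + L := h _ (Nat.le_add_right m j)
      _ ≤ r * (r ^ j * u m + (∑ i ∈ range j, r ^ i) * L) + L := by gcongr
      _ = r ^ (j + 1) * u m + (∑ i ∈ range (j + 1), r ^ i) * L := by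
        rw [geom_sum_succ]; ring

structure IceBounds (a b c d : ℝ) : Prop where
  one_le_a : 1 ≤ a
  a_lt_b : a < b
  one_le_c : 1 ≤ c
  c_le_d : c ≤ d
  four_mul_add_le : 4 * (a + b) ≤ 3 * (3 * c + d)

namespace IceBounds

variable {a b c d : ℝ}

theorem step (h : IceBounds a b c d) :
    IceBounds ((a + b) ^ 2 * (a + 3 * c + d)) ((a + b) ^ 2 * (b + 3 * c + d))
      (a ^ 2 * b + b ^ 2 * a + (3 * c + d) ^ 3) (a ^ 3 + b ^ 3 + (3 * c + d) ^ 3) := by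
  obtain ⟨ha, hab, hc, hcd, hsum⟩ := h
  set f := 3 * c + d
  have hf : 4 ≤ f := by linarith
  have hs : 0 < (a + b) ^ 2 := pow_pos (by linarith) 2
  refine ⟨?_, ?_, ?_, ?_, ?_⟩
  · nlinarith
  · rw [add_assoc a, add_assoc b]; gcongr
  · nlinarith [pow_le_pow_left₀ (by norm_num) hf 3]
  · nlinarith [sq_nonneg (a - b)]
  · have hs' : a + b ≤ 3 * f / 4 := by linarith
    have hc' : f ^ 3 ≤ a ^ 2 * b + b ^ 2 * a + f ^ 3 := by
      nlinarith [mul_pos hs (by linarith : 0 < b)]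
    have hd' : f ^ 3 ≤ a ^ 3 + b ^ 3 + f ^ 3 := by
      nlinarith [pow_pos (by linarith : 0 < a) 3, pow_pos (by linarith : 0 < b) 3]
    calc 4 * ((a + b) ^ 2 * (a + 3 * c + d) + (a + b) ^ 2 * (b + 3 * c + d))
        = 4 * (a + b) ^ 2 * (a + b + 2 * f) := by ring
      _ ≤ 4 * (3 * f / 4) ^ 2 * (3 * f / 4 + 2 * f) := by gcongr <;> linarith
      _ ≤ 12 * f ^ 3 := by nlinarith [pow_pos (by linarith : 0 < f) 3]
      _ ≤ _ := by linarith

theorem gamma_step (h : IceBounds a b c d) :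
    (a + b) ^ 2 * (b + 3 * c + d) * c ≤ b * (a ^ 2 * b + b ^ 2 * a + (3 * c + d) ^ 3) := by
  obtain ⟨ha, hab, hc, hcd, hsum⟩ := h
  set f := 3 * c + d
  have hb : 0 < b := by linarith
  have hf : 0 < f := by linarith
  have hs2 : (a + b) ^ 2 ≤ 2 * b * (3 * f / 4) := by nlinarith
  calc (a + b) ^ 2 * (b + 3 * c + d) * c ≤ 2 * b * (3 * f / 4) * (7 * f / 4) * (f / 4) := by
        gcongr <;> nlinarith [mul_pos hb hf]
    _ = 21 / 32 * (b * f ^ 3) := by ring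
    _ ≤ b * (a ^ 2 * b + b ^ 2 * a + f ^ 3) := by
        nlinarith [mul_pos (mul_pos hb (by linarith : 0 < a)) (by linarith : 0 < a + b),
          mul_pos hb (pow_pos hf 3)]

theorem beta_step (h : IceBounds a b c d) {A B C D : ℝ}
    (hA : A = (a + b) ^ 2 * (a + 3 * c + d)) (hB : B = (a + b) ^ 2 * (b + 3 * c + d))
    (hC : C = a ^ 2 * b + b ^ 2 * a + (3 * c + d) ^ 3)
    (hD : D = a ^ 3 + b ^ 3 + (3 * c + d) ^ 3) :
    (A ^ 3 + B ^ 3 + (3 * C + D) ^ 3) * C ≤ D * (A ^ 2 * B + B ^ 2 * A + (3 * C + D) ^ 3) := by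
  obtain ⟨ha, hab, hc, hcd, hsum⟩ := h
  set f := 3 * c + d
  have hf : 0 < f := by linarith
  have hs : a + b ≤ f := by linarith
  have hs0 : 0 ≤ a + b := by linarith
  have hab' : 0 < a * b := by nlinarith
  have hC_le : C ≤ 2 * f ^ 3 := by
    have : (a + b) ^ 3 ≤ f ^ 3 := by gcongr
    rw [hC]; nlinarith [sq_nonneg (a - b)]
  have hC_ge : f ^ 3 ≤ C := by rw [hC]; nlinarith [mul_nonneg hab'.le hs0]
  have hDC : D = C + (a + b) * (b - a) ^ 2 := by rw [hC, hD]; ring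
  have hCD : 4 * f ^ 3 ≤ 3 * C + D := by
    linarith [mul_nonneg hs0 (sq_nonneg (b - a))]
  have hgrowth : C * ((a + b) ^ 5 * (a + b + 2 * f)) ≤ (3 * C + D) ^ 3 :=
    calc C * ((a + b) ^ 5 * (a + b + 2 * f)) ≤ 2 * f ^ 3 * (f ^ 5 * (f + 2 * f)) := by
          have : 0 ≤ (a + b) ^ 5 * (a + b + 2 * f) := by positivity
          gcongr
      _ ≤ (4 * f ^ 3) ^ 3 := by nlinarith [pow_pos hf 9]
      _ ≤ (3 * C + D) ^ 3 := by gcongr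
  have hA0 : 0 ≤ A := by rw [hA]; exact mul_nonneg (sq_nonneg _) (by linarith)
  have hB0 : 0 ≤ B := by rw [hB]; exact mul_nonneg (sq_nonneg _) (by linarith)
  -- `D - C = (a + b) (b - a)^2` and `B - A = (a + b)^2 (b - a)`, so this factor comes out.
  have hfactor :
      D * (A ^ 2 * B + B ^ 2 * A + (3 * C + D) ^ 3) - (A ^ 3 + B ^ 3 + (3 * C + D) ^ 3) * C =
      (a + b) * (b - a) ^ 2 *
        (A ^ 2 * B + B ^ 2 * A + ((3 * C + D) ^ 3 - C * ((a + b) ^ 5 * (a + b + 2 * f)))) := by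
    rw [hDC, hA, hB]; ring
  rw [← sub_nonneg, hfactor]
  have : 0 ≤ (3 * C + D) ^ 3 - C * ((a + b) ^ 5 * (a + b + 2 * f)) := by linarith
  positivity

end IceBounds

theorem pa_succ (k : ℕ) : (pa (k + 1) : ℝ) = (pa k + pb k) ^ 2 * (pa k + 3 * pc k + pd k) := by
  exact_mod_cast (rfl : pa (k + 1) = (pa k + pb k) ^ 2 * (pa k + 3 * pc k + pd k))

theorem pb_succ (k : ℕ) : (pb (k + 1) : ℝ) = (pa k + pb k) ^ 2 * (pb k + 3 * pc k + pd k) := by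
  exact_mod_cast (rfl : pb (k + 1) = (pa k + pb k) ^ 2 * (pb k + 3 * pc k + pd k))

theorem pc_succ (k : ℕ) :
    (pc (k + 1) : ℝ) = pa k ^ 2 * pb k + pb k ^ 2 * pa k + (3 * pc k + pd k) ^ 3 := by
  exact_mod_cast (rfl : pc (k + 1) = pa k ^ 2 * pb k + pb k ^ 2 * pa k + (3 * pc k + pd k) ^ 3)

theorem pd_succ (k : ℕ) : (pd (k + 1) : ℝ) = pa k ^ 3 + pb k ^ 3 + (3 * pc k + pd k) ^ 3 := by
  exact_mod_cast (rfl : pd (k + 1) = pa k ^ 3 + pb k ^ 3 + (3 * pc k + pd k) ^ 3)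

theorem iceBounds {k : ℕ} (hk : 1 ≤ k) : IceBounds (pa k) (pb k) (pc k) (pd k) := by
  induction k, hk using Nat.le_induction with
  | base => constructor <;> norm_num [pa, pb, pc, pd, iceSeq, iceStep]
  | succ k _ ih =>
    rw [pa_succ, pb_succ, pc_succ, pd_succ]
    exact ih.step

theorem pc_pos {k : ℕ} (hk : 1 ≤ k) : (0 : ℝ) < pc k :=
  one_pos.trans_le (iceBounds hk).one_le_c

theorem one_le_betaSeq {k : ℕ} (hk : 1 ≤ k) : 1 ≤ betaSeq k :=
  (one_le_div (pc_pos hk)).2 (iceBounds hk).c_le_d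

theorem gammaSeq_pos {k : ℕ} (hk : 1 ≤ k) : 0 < gammaSeq k :=
  div_pos (by linarith [(iceBounds hk).one_le_a, (iceBounds hk).a_lt_b]) (pc_pos hk)

theorem gammaSeq_antitoneOn : AntitoneOn gammaSeq {k | 1 ≤ k} := by
  refine antitoneOn_nat_Ici_of_succ_le fun k hk ↦ ?_
  rw [gammaSeq, gammaSeq, div_le_div_iff₀ (pc_pos (by omega)) (pc_pos hk), pb_succ, pc_succ]
  exact (iceBounds hk).gamma_step

theorem betaSeq_antitoneOn : AntitoneOn betaSeq {k | 1 ≤ k} := by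
  refine antitoneOn_nat_Ici_of_succ_le fun k hk ↦ ?_
  rw [betaSeq, betaSeq, div_le_div_iff₀ (pc_pos (by omega)) (pc_pos hk)]
  rcases Nat.lt_or_ge k 2 with hk1 | hk2
  · obtain rfl : k = 1 := by omega
    norm_num [pc, pd, iceSeq, iceStep]
  · obtain ⟨j, rfl⟩ : ∃ j, k = j + 1 := ⟨k - 1, by omega⟩
    rw [pd_succ (j + 1), pc_succ (j + 1)]
    exact (iceBounds (by omega : 1 ≤ j)).beta_step (pa_succ j) (pb_succ j) (pc_succ j) (pd_succ j)

theorem pb_le_gammaSeq_mul {m k : ℕ} (hm : 1 ≤ m) (hmk : m ≤ k) :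
    (pb k : ℝ) ≤ gammaSeq m * pc k := by
  rw [← div_le_iff₀ (pc_pos (hm.trans hmk))]
  exact gammaSeq_antitoneOn hm (hm.trans hmk) hmk

theorem pd_le_betaSeq_mul {m k : ℕ} (hm : 1 ≤ m) (hmk : m ≤ k) :
    (pd k : ℝ) ≤ betaSeq m * pc k := by
  rw [← div_le_iff₀ (pc_pos (hm.trans hmk))]
  exact betaSeq_antitoneOn hm (hm.trans hmk) hmk

theorem eight_mul_pc_pow_three_le {k : ℕ} (hk : 1 ≤ k) :
    (8 * pc k : ℝ) ^ 3 ≤ 8 * pc (k + 1) := by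
  obtain ⟨ha, hab, hc, hcd, -⟩ := iceBounds hk
  have h4 : (4 * pc k : ℝ) ^ 3 ≤ (3 * pc k + pd k) ^ 3 := by gcongr; linarith
  rw [pc_succ]
  nlinarith [mul_pos (mul_pos (by linarith : (0 : ℝ) < pa k) (by linarith : (0 : ℝ) < pb k))
    (by linarith : (0 : ℝ) < pa k + pb k)]

theorem eight_mul_pc_pow_le {m : ℕ} (hm : 1 ≤ m) (j : ℕ) :
    (8 * (pc m : ℝ)) ^ 3 ^ j ≤ 8 * pc (m + j) := by
  induction j with
  | zero => simp
  | succ j ih =>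
    calc (8 * (pc m : ℝ)) ^ 3 ^ (j + 1) = ((8 * (pc m : ℝ)) ^ 3 ^ j) ^ 3 := by
          rw [pow_succ, pow_mul]
      _ ≤ (8 * (pc (m + j) : ℝ)) ^ 3 := by gcongr
      _ ≤ 8 * pc (m + j + 1) := eight_mul_pc_pow_three_le (by omega)

theorem eight_mul_pc_lt_iceI {k : ℕ} (hk : 1 ≤ k) : (8 * pc k : ℝ) < iceI k := by
  obtain ⟨ha, hab, -, hcd, -⟩ := iceBounds hk
  simp only [iceI]; push_cast; linarith

theorem three_pow_mul_log_lt_log_iceI {m : ℕ} (hm : 1 ≤ m) (j : ℕ) :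
    3 ^ j * log (8 * pc m) < log (iceI (m + j)) := by
  have hpos : (0 : ℝ) < 8 * pc (m + j) := by linarith [pc_pos (by omega : 1 ≤ m + j)]
  calc 3 ^ j * log (8 * pc m) = log ((8 * pc m) ^ 3 ^ j) := by rw [log_pow]; push_cast; ring
    _ ≤ log (8 * pc (m + j)) :=
        log_le_log (pow_pos (by linarith [pc_pos hm]) _) (eight_mul_pc_pow_le hm j)
    _ < log (iceI (m + j)) := log_lt_log hpos (eight_mul_pc_lt_iceI (by omega))

theorem pc_succ_le {m k : ℕ} (hm : 1 ≤ m) (hmk : m ≤ k) :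
    (pc (k + 1) : ℝ) ≤ pc k ^ 3 * ((3 + betaSeq m) ^ 3 * (1 + gammaSeq m ^ 3 / 32)) := by
  obtain ⟨ha, hab, -, -, -⟩ := iceBounds (hm.trans hmk)
  have hc := pc_pos (hm.trans hmk)
  have h64 : (4 : ℝ) ^ 3 ≤ (3 + betaSeq m) ^ 3 := by gcongr; linarith [one_le_betaSeq hm]
  have hγ := gammaSeq_pos hm
  have hsq : (pa k : ℝ) ^ 2 ≤ pb k ^ 2 := by gcongr
  have hb := pb_le_gammaSeq_mul hm hmk
  have hf : 3 * pc k + pd k ≤ (3 + betaSeq m) * pc k := by linarith [pd_le_betaSeq_mul hm hmk]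
  calc (pc (k + 1) : ℝ) ≤ 2 * pb k ^ 3 + (3 * pc k + pd k) ^ 3 := by
        rw [pc_succ]
        nlinarith [mul_le_mul_of_nonneg_right hsq (by linarith : (0 : ℝ) ≤ pb k),
          mul_le_mul_of_nonneg_left hab.le (sq_nonneg (pb k : ℝ))]
    _ ≤ 2 * (gammaSeq m * pc k) ^ 3 + ((3 + betaSeq m) * pc k) ^ 3 := by
        gcongr
    _ = pc k ^ 3 * ((3 + betaSeq m) ^ 3 + 2 * gammaSeq m ^ 3) := by ring
    _ ≤ pc k ^ 3 * ((3 + betaSeq m) ^ 3 * (1 + gammaSeq m ^ 3 / 32)) := by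
        gcongr
        nlinarith [pow_pos hγ 3]

theorem log_pc_le {m : ℕ} (hm : 1 ≤ m) (j : ℕ) :
    log (pc (m + j)) ≤ 3 ^ j * log (pc m) +
      (3 ^ j - 1) / 2 * (3 * log (3 + betaSeq m) + log (1 + gammaSeq m ^ 3 / 32)) := by
  have hβ : 0 < 3 + betaSeq m := by linarith [one_le_betaSeq hm]
  have hγ : 0 < 1 + gammaSeq m ^ 3 / 32 := by linarith [pow_pos (gammaSeq_pos hm) 3]
  have hrec : ∀ k, m ≤ k → log (pc (k + 1)) ≤
      3 * log (pc k) + (3 * log (3 + betaSeq m) + log (1 + gammaSeq m ^ 3 / 32)) := by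
    intro k hmk
    have hc := pc_pos (hm.trans hmk)
    calc log (pc (k + 1))
        ≤ log (pc k ^ 3 * ((3 + betaSeq m) ^ 3 * (1 + gammaSeq m ^ 3 / 32))) :=
          log_le_log (pc_pos (by omega)) (pc_succ_le hm hmk)
      _ = _ := by
          rw [log_mul (by positivity) (by positivity), log_mul (by positivity) hγ.ne', log_pow,
            log_pow]
          push_cast; ring
  have h := le_pow_mul_add_geom_sum_mul (u := fun k ↦ log (pc k)) (by norm_num) hrec j
  rwa [geom_sum_eq (by norm_num : (3 : ℝ) ≠ 1), show (3 : ℝ) - 1 = 2 by norm_num] at h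

theorem iceI_lt {m k : ℕ} (hm : 1 ≤ m) (hmk : m ≤ k) :
    (iceI k : ℝ) < 8 * (betaSeq m + 3 / 2 * gammaSeq m) * pc k := by
  obtain ⟨-, hab, -, hcd, -⟩ := iceBounds (hm.trans hmk)
  have hb := pb_le_gammaSeq_mul hm hmk
  have hd := pd_le_betaSeq_mul hm hmk
  simp only [iceI]; push_cast; linarith

theorem log_iceI_lt {m k : ℕ} (hm : 1 ≤ m) (hmk : m ≤ k) :
    log (iceI k) < 3 * log 2 + log (betaSeq m + 3 / 2 * gammaSeq m) + log (pc k) := by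
  have hc := pc_pos (hm.trans hmk)
  have hβγ : 0 < betaSeq m + 3 / 2 * gammaSeq m := by
    linarith [one_le_betaSeq hm, gammaSeq_pos hm]
  have hI : (0 : ℝ) < iceI k := by linarith [eight_mul_pc_lt_iceI (hm.trans hmk)]
  calc log (iceI k) < log (2 ^ 3 * (betaSeq m + 3 / 2 * gammaSeq m) * pc k) := by
        apply log_lt_log hI; linarith [iceI_lt hm hmk]
    _ = _ := by
        rw [log_mul (by positivity) hc.ne', log_mul (by positivity) hβγ.ne', log_pow]
        push_cast; ring

theorem cast_vSG (n : ℕ) : (vSG n : ℝ) = 3 * (3 ^ n + 1) / 2 := by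
  have h : 2 ∣ 3 * (3 ^ n + 1) := Dvd.dvd.mul_left (Odd.pow (by decide)).add_one.two_dvd 3
  rw [vSG, Nat.cast_div h (by norm_num)]; push_cast; ring

theorem stmt_13 (m n : ℕ) (hm : 1 ≤ m) (hmn : m < n) :
    2 * Real.log 2 / ((3 : ℝ) ^ n + 1) +
        (((3 : ℝ) ^ m)⁻¹ - ((3 : ℝ) ^ n)⁻¹) * Real.log 4 / (1 + ((3 : ℝ) ^ n)⁻¹) +
        2 / 3 * (((3 : ℝ) ^ m)⁻¹ / (1 + ((3 : ℝ) ^ n)⁻¹)) * Real.log (pc m) <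
      Real.log (iceI n) / (vSG n : ℝ) ∧
    Real.log (iceI n) / (vSG n : ℝ) <
      2 / ((3 : ℝ) ^ n + 1) *
          (Real.log 2 + 1 / 3 * Real.log (betaSeq m + 3 / 2 * gammaSeq m)) +
        (((3 : ℝ) ^ m)⁻¹ - ((3 : ℝ) ^ n)⁻¹) / (1 + ((3 : ℝ) ^ n)⁻¹) *
          (Real.log 4 + Real.log (1 + (betaSeq m - 1) / 4) +
            1 / 3 * Real.log (1 + gammaSeq m ^ 3 / 32)) +
        2 / 3 * (((3 : ℝ) ^ m)⁻¹ / (1 + ((3 : ℝ) ^ n)⁻¹)) * Real.log (pc m) := by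
  obtain ⟨j, rfl⟩ := Nat.exists_eq_add_of_le hmn.le
  have hv : (0 : ℝ) < vSG (m + j) := by rw [cast_vSG]; positivity
  have hc := pc_pos hm
  have hlog4 : log 4 = 2 * log 2 := by
    rw [show (4 : ℝ) = 2 ^ 2 by norm_num, log_pow]; push_cast; ring
  have hlog8 : log (8 * pc m) = 3 * log 2 + log (pc m) := by
    rw [log_mul (by norm_num) hc.ne', show (8 : ℝ) = 2 ^ 3 by norm_num, log_pow]; push_cast; ring
  have hlog3β : log 4 + log (1 + (betaSeq m - 1) / 4) = log (3 + betaSeq m) := by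
    rw [← log_mul (by norm_num) (by linarith [one_le_betaSeq hm])]; ring_nf
  have hup := (log_iceI_lt hm (Nat.le_add_right m j)).trans_le
    (add_le_add_right (log_pc_le hm j) _)
  rw [lt_div_iff₀ hv, div_lt_iff₀ hv, cast_vSG, pow_add]
  refine ⟨lt_of_eq_of_lt ?_ (three_pow_mul_log_lt_log_iceI hm j), hup.trans_eq ?_⟩
  · rw [hlog4, hlog8]; field_simp; ring
  · rw [hlog3β]; field_simp; ring
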